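/- For n ≥ 2, the sequence n ↦ 4·ζ(n)²/ζ(2n) is monotonically decreasing in n. -/
import Mathlib


/-- The Riemann zeta function for real arguments, `ζ(s) = ∑_{k ≥ 1} k^{-s}`. -/
noncomputable def zetaR (s : ℝ) : ℝ := ∑' k : ℕ, (1 : ℝ) / (k + 1 : ℝ) ^ s

namespace ZetaAux

/-- the summand `1 / k ^ s` -/
noncomputable def fr (s : ℝ) (k : ℕ) : ℝ := 1 / (k : ℝ) ^ s

lemma fr_nonneg (s : ℝ) (k : ℕ) : 0 ≤ fr s k := by
  unfold fr; positivity

lemma fr_zero (s : ℝ) (hs : s ≠ 0) : fr s 0 = 0 := by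
  simp [fr, Real.zero_rpow hs]

lemma fr_summable {s : ℝ} (hs : 1 < s) : Summable (fr s) :=
  Real.summable_one_div_nat_rpow.mpr hs

lemma zetaR_eq {s : ℝ} (hs : 1 < s) : zetaR s = ∑' k : ℕ, fr s k := by
  rw [Summable.tsum_eq_zero_add (fr_summable hs), fr_zero s (by linarith), zero_add]
  unfold zetaR
  refine tsum_congr fun k => ?_
  simp [fr, Nat.cast_add, Nat.cast_one]

lemma zetaR_eq' {s : ℝ} : zetaR s = ∑' k : ℕ, fr s (k + 1) := by
  unfold zetaR
  refine tsum_congr fun k => ?_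
  simp [fr, Nat.cast_add, Nat.cast_one]

lemma zetaR_pos {s : ℝ} (hs : 1 < s) : 0 < zetaR s := by
  rw [zetaR_eq hs]
  have h1 : fr s 1 = 1 := by simp [fr]
  have := Summable.le_tsum (fr_summable hs) 1 (fun i _ => fr_nonneg s i)
  rw [h1] at this
  linarith

/-- coprime positive pairs -/
def Cset : Set (ℕ × ℕ) := {p | 0 < p.1 ∧ 0 < p.2 ∧ Nat.Coprime p.1 p.2}

/-- positive pairs -/
def Pset : Set (ℕ × ℕ) := {p | 0 < p.1 ∧ 0 < p.2}

noncomputable def T (s : ℝ) : ℝ :=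
  ∑' c : Cset, fr s (c : ℕ × ℕ).1 * fr s (c : ℕ × ℕ).2

/-- the gcd-factoring bijection -/
noncomputable def gcdEquiv : ℕ × Cset ≃ Pset where
  toFun q := ⟨((q.1 + 1) * (q.2 : ℕ × ℕ).1, (q.1 + 1) * (q.2 : ℕ × ℕ).2),
    Nat.mul_pos (Nat.succ_pos _) q.2.2.1, Nat.mul_pos (Nat.succ_pos _) q.2.2.2.1⟩
  invFun p :=
    (Nat.gcd (p : ℕ × ℕ).1 (p : ℕ × ℕ).2 - 1,
      ⟨((p : ℕ × ℕ).1 / Nat.gcd (p : ℕ × ℕ).1 (p : ℕ × ℕ).2,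
        (p : ℕ × ℕ).2 / Nat.gcd (p : ℕ × ℕ).1 (p : ℕ × ℕ).2), by
        obtain ⟨⟨m, n⟩, hm, hn⟩ := p
        have hg : 0 < Nat.gcd m n := Nat.gcd_pos_of_pos_left _ hm
        exact ⟨Nat.div_pos (Nat.le_of_dvd hm (Nat.gcd_dvd_left m n)) hg,
          Nat.div_pos (Nat.le_of_dvd hn (Nat.gcd_dvd_right m n)) hg,
          Nat.coprime_div_gcd_div_gcd hg⟩⟩)
  left_inv := by
    rintro ⟨k, ⟨⟨a, b⟩, ha, hb, hab⟩⟩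
    have hg : Nat.gcd ((k + 1) * a) ((k + 1) * b) = k + 1 := by
      rw [Nat.gcd_mul_left, hab, mul_one]
    simp only [hg]
    refine Prod.ext (by simp) (Subtype.ext (Prod.ext ?_ ?_)) <;>
      simp [Nat.mul_div_cancel_left _ (Nat.succ_pos k)]
  right_inv := by
    rintro ⟨⟨m, n⟩, hm, hn⟩
    have hg : 0 < Nat.gcd m n := Nat.gcd_pos_of_pos_left _ hm
    refine Subtype.ext (Prod.ext ?_ ?_) <;>
      simp only [Nat.sub_add_cancel hg] <;>
      [exact Nat.mul_div_cancel' (Nat.gcd_dvd_left m n);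
       exact Nat.mul_div_cancel' (Nat.gcd_dvd_right m n)]

lemma F_summable {s : ℝ} (hs : 1 < s) :
    Summable (fun p : ℕ × ℕ => fr s p.1 * fr s p.2) :=
  (fr_summable hs).mul_of_nonneg (fr_summable hs) (fun k => fr_nonneg s k)
    (fun k => fr_nonneg s k)

lemma fr_mul (s : ℝ) (d a b : ℕ) (hd : 0 < d) :
    fr s (d * a) * fr s (d * b) = fr (2 * s) d * (fr s a * fr s b) := by
  have hd' : (0 : ℝ) < d := by exact_mod_cast hd
  unfold fr
  push_cast
  rw [Real.mul_rpow hd'.le (Nat.cast_nonneg a), Real.mul_rpow hd'.le (Nat.cast_nonneg b),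
    two_mul, Real.rpow_add hd']
  simp only [one_div, ← mul_inv]
  congr 1
  ring

set_option maxHeartbeats 1000000 in
lemma key {s : ℝ} (hs : 1 < s) : zetaR s * zetaR s = zetaR (2 * s) * T s := by
  have hF := F_summable hs
  have h1 : zetaR s * zetaR s = ∑' p : ℕ × ℕ, fr s p.1 * fr s p.2 := by
    rw [Summable.tsum_prod' hF hF.prod_factor]
    simp only [tsum_mul_left, tsum_mul_right, zetaR_eq hs]
  have h2 : (∑' p : ℕ × ℕ, fr s p.1 * fr s p.2)
      = ∑' p : Pset, fr s (p : ℕ × ℕ).1 * fr s (p : ℕ × ℕ).2 := by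
    refine (tsum_subtype_eq_of_support_subset ?_).symm
    intro p hp
    by_contra hcon
    simp only [Pset, Set.mem_setOf_eq, not_and_or, Nat.not_lt, Nat.le_zero] at hcon
    rcases hcon with h | h <;>
      simp [Function.mem_support, h, fr_zero s (by linarith)] at hp
  have h3 : (∑' p : Pset, fr s (p : ℕ × ℕ).1 * fr s (p : ℕ × ℕ).2)
      = ∑' q : ℕ × Cset,
          fr s ((gcdEquiv q : ℕ × ℕ)).1 * fr s ((gcdEquiv q : ℕ × ℕ)).2 :=
    (gcdEquiv.tsum_eq _).symm
  have h4 : ∀ q : ℕ × Cset,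
      fr s ((gcdEquiv q : ℕ × ℕ)).1 * fr s ((gcdEquiv q : ℕ × ℕ)).2
        = fr (2 * s) (q.1 + 1) * (fr s (q.2 : ℕ × ℕ).1 * fr s (q.2 : ℕ × ℕ).2) := by
    rintro ⟨k, c⟩
    exact fr_mul s (k + 1) _ _ (Nat.succ_pos k)
  have hsum4 : Summable (fun q : ℕ × Cset =>
      fr (2 * s) (q.1 + 1) * (fr s (q.2 : ℕ × ℕ).1 * fr s (q.2 : ℕ × ℕ).2)) := by
    refine Summable.congr ?_ h4
    exact gcdEquiv.summable_iff.mpr ((hF.subtype Pset))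
  calc zetaR s * zetaR s
      = ∑' q : ℕ × Cset,
          fr (2 * s) (q.1 + 1) * (fr s (q.2 : ℕ × ℕ).1 * fr s (q.2 : ℕ × ℕ).2) := by
        rw [h1, h2, h3]; exact tsum_congr h4
    _ = zetaR (2 * s) * T s := by
        rw [Summable.tsum_prod' hsum4 hsum4.prod_factor]
        simp only [tsum_mul_left, tsum_mul_right]
        rw [← zetaR_eq', T]

lemma T_antitone {s t : ℝ} (hs : 1 < s) (hst : s ≤ t) : T t ≤ T s := by
  have ht : 1 < t := lt_of_lt_of_le hs hst
  refine Summable.tsum_le_tsum ?_ ((F_summable ht).subtype Cset) ((F_summable hs).subtype Cset)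
  rintro ⟨⟨a, b⟩, ha, hb, -⟩
  have key : ∀ k : ℕ, 0 < k → fr t k ≤ fr s k := by
    intro k hk
    have h1 : (1 : ℝ) ≤ (k : ℝ) := by exact_mod_cast hk
    unfold fr
    exact one_div_le_one_div_of_le (Real.rpow_pos_of_pos (by linarith) s)
      (Real.rpow_le_rpow_of_exponent_le h1 hst)
  exact mul_le_mul (key a ha) (key b hb) (fr_nonneg t b) (fr_nonneg s a)

end ZetaAux

theorem fn_antitone (m n : ℕ) (hm : 2 ≤ m) (hmn : m ≤ n) :
    4 * (zetaR n) ^ 2 / zetaR (2 * n) ≤ 4 * (zetaR m) ^ 2 / zetaR (2 * m) := by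
  open ZetaAux in
  have hs : (1 : ℝ) < m := by exact_mod_cast lt_of_lt_of_le one_lt_two (by exact_mod_cast hm)
  have ht : (1 : ℝ) < n := lt_of_lt_of_le hs (by exact_mod_cast hmn)
  have hst : (m : ℝ) ≤ n := by exact_mod_cast hmn
  have reduce : ∀ s : ℝ, 1 < s → 4 * (zetaR s) ^ 2 / zetaR (2 * s) = 4 * ZetaAux.T s := by
    intro s hs1
    have hz : 0 < zetaR (2 * s) := ZetaAux.zetaR_pos (by linarith)
    rw [sq, ZetaAux.key hs1, mul_comm (zetaR (2 * s)) (ZetaAux.T s), ← mul_assoc,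
      mul_div_assoc, div_self hz.ne', mul_one]
  rw [reduce _ hs, reduce _ ht]
  have := ZetaAux.T_antitone hs hst
  linarith
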